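/- Rains relative entropy of approximate e-bits (sandwiched Rényi version): let ε ∈ [0,1], let Φ̃^d be a state on H_Â⊗H_B̂ with dim H_Â = dim H_B̂ = d, and suppose F(Φ̃^d, Φ^d) ≥ 1−ε. Then for all α > 1, log₂ d ≤ R̃_α(Φ̃^d) + (α/(α−1)) log₂(1/(1−ε)). -/

import Mathlib

open scoped Matrix Classical ComplexOrder

namespace RainsPaper

/-- Natural matrix logarithm of a Hermitian matrix via spectral decomposition
(with the convention `log 0 = 0` on the kernel); junk value `0` otherwise. -/
noncomputable def matLog {n : Type} [Fintype n] [DecidableEq n] (A : Matrix n n ℂ) :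
    Matrix n n ℂ :=
  if hA : A.IsHermitian then
    (hA.eigenvectorUnitary : Matrix n n ℂ) *
      (Matrix.diagonal fun i => (Real.log (hA.eigenvalues i) : ℂ)) *
      (star (hA.eigenvectorUnitary : Matrix n n ℂ))
  else 0

/-- Real power of a Hermitian matrix via spectral decomposition (with the convention
`0 ^ r = 0` for `r ≠ 0`, so negative powers are taken on the support);
junk value `0` otherwise. -/
noncomputable def matPow {n : Type} [Fintype n] [DecidableEq n] (A : Matrix n n ℂ) (r : ℝ) :
    Matrix n n ℂ :=
  if hA : A.IsHermitian then
    (hA.eigenvectorUnitary : Matrix n n ℂ) *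
      (Matrix.diagonal fun i => ((hA.eigenvalues i ^ r : ℝ) : ℂ)) *
      (star (hA.eigenvectorUnitary : Matrix n n ℂ))
  else 0

/-- A state is a positive semidefinite operator with unit trace. -/
def IsState {n : Type} [Fintype n] (ρ : Matrix n n ℂ) : Prop :=
  ρ.PosSemidef ∧ ρ.trace = 1

/-- `supp ω ⊆ supp τ`, expressed (for Hermitian matrices) as `ker τ ⊆ ker ω`. -/
def SuppSubset {n : Type} [Fintype n] (ω τ : Matrix n n ℂ) : Prop :=
  ∀ v : n → ℂ, τ.mulVec v = 0 → ω.mulVec v = 0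

/-- Trace norm `‖X‖₁ = Tr √(X†X)`. -/
noncomputable def traceNorm {n : Type} [Fintype n] [DecidableEq n] (X : Matrix n n ℂ) : ℝ :=
  ((matPow (Xᴴ * X) 2⁻¹).trace).re

/-- Fidelity `F(ω,τ) = ‖√ω √τ‖₁²`. -/
noncomputable def fidelity {n : Type} [Fintype n] [DecidableEq n] (ω τ : Matrix n n ℂ) : ℝ :=
  (traceNorm (matPow ω 2⁻¹ * matPow τ 2⁻¹)) ^ 2

/-- Extended base-2 logarithm: `elog2 x = log₂ x` for `x > 0` and `-∞` for `x ≤ 0`. -/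
noncomputable def elog2 (x : ℝ) : EReal :=
  if x ≤ 0 then ⊥ else ((Real.logb 2 x : ℝ) : EReal)

/-- Quantum relative entropy `D(ω‖τ) = Tr[ω (log₂ ω - log₂ τ)]` if `supp ω ⊆ supp τ`,
and `+∞` otherwise. -/
noncomputable def qRelEnt {n : Type} [Fintype n] [DecidableEq n] (ω τ : Matrix n n ℂ) : EReal :=
  if SuppSubset ω τ then
    ((((ω * (matLog ω - matLog τ)).trace).re / Real.log 2 : ℝ) : EReal)
  else ⊤

/-- Sandwiched Rényi relative entropy
`D̃_α(ω‖τ) = (α-1)⁻¹ log₂ Tr[(τ^{(1-α)/(2α)} ω τ^{(1-α)/(2α)})^α]` when `α ∈ (0,1)`, or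
`α > 1` and `supp ω ⊆ supp τ`; `+∞` otherwise. -/
noncomputable def sandRenyi {n : Type} [Fintype n] [DecidableEq n] (α : ℝ)
    (ω τ : Matrix n n ℂ) : EReal :=
  if (0 < α ∧ α < 1) ∨ (1 < α ∧ SuppSubset ω τ) then
    (((α - 1)⁻¹ : ℝ) : EReal) *
      elog2 (((matPow (matPow τ ((1 - α) / (2 * α)) * ω * matPow τ ((1 - α) / (2 * α))) α).trace).re)
  else ⊤

/-- Petz Rényi relative entropy `D_α(ω‖τ) = (α-1)⁻¹ log₂ Tr[ω^α τ^{1-α}]` when `α ∈ (0,1)`,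
or `α > 1` and `supp ω ⊆ supp τ`; `+∞` otherwise. -/
noncomputable def petzRenyi {n : Type} [Fintype n] [DecidableEq n] (α : ℝ)
    (ω τ : Matrix n n ℂ) : EReal :=
  if (0 < α ∧ α < 1) ∨ (1 < α ∧ SuppSubset ω τ) then
    (((α - 1)⁻¹ : ℝ) : EReal) * elog2 (((matPow ω α * matPow τ (1 - α)).trace).re)
  else ⊤

/-- Geometric Rényi relative entropy `D̂_α(ω‖τ) = (α-1)⁻¹ log₂ Tr[τ (τ^{-1/2} ω τ^{-1/2})^α]`
(inverses on the support) when `α ∈ (0,1)`, or `α > 1` and `supp ω ⊆ supp τ`; `+∞` otherwise. -/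
noncomputable def geomRenyi {n : Type} [Fintype n] [DecidableEq n] (α : ℝ)
    (ω τ : Matrix n n ℂ) : EReal :=
  if (0 < α ∧ α < 1) ∨ (1 < α ∧ SuppSubset ω τ) then
    (((α - 1)⁻¹ : ℝ) : EReal) *
      elog2 (((τ * matPow (matPow τ (-2⁻¹) * ω * matPow τ (-2⁻¹)) α).trace).re)
  else ⊤

/-- Classical relative entropy `D(p‖q)`, equal to `+∞` unless `supp p ⊆ supp q`
(terms with `p x = 0` contribute zero). -/
noncomputable def cRelEnt {X : Type} [Fintype X] (p q : X → ℝ) : EReal :=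
  if ∀ x, p x ≠ 0 → q x ≠ 0 then
    ((∑ x, p x * Real.logb 2 (p x / q x) : ℝ) : EReal)
  else ⊤

/-- `p` is a probability distribution on the finite set `X`. -/
def IsProb {X : Type} [Fintype X] (p : X → ℝ) : Prop :=
  (∀ x, 0 ≤ p x) ∧ ∑ x, p x = 1

/-- The classical–quantum operator `∑ x p(x) |x⟩⟨x| ⊗ K x`. -/
noncomputable def cqOp {X A : Type} [DecidableEq X] (p : X → ℝ)
    (K : X → Matrix A A ℂ) : Matrix (X × A) (X × A) ℂ :=
  Matrix.of fun a b => if a.1 = b.1 then (p a.1 : ℂ) * K a.1 a.2 b.2 else 0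

/-- Partial transpose (on the second tensor factor):
`(id ⊗ T)(X)_{(i,k),(j,l)} = X_{(i,l),(j,k)}`. -/
def ptrans {a b : Type} (X : Matrix (a × b) (a × b) ℂ) : Matrix (a × b) (a × b) ℂ :=
  Matrix.of fun p q => X (p.1, q.2) (q.1, p.2)

/-- The partial transpose as a linear map. -/
def ptransL {a b : Type} : Matrix (a × b) (a × b) ℂ →ₗ[ℂ] Matrix (a × b) (a × b) ℂ where
  toFun := ptrans
  map_add' _ _ := rfl
  map_smul' _ _ := rfl

/-- `PPT'` : positive semidefinite bipartite operators whose partial transpose has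
trace norm at most 1. -/
def PPTprime {a b : Type} [Fintype a] [Fintype b] [DecidableEq a] [DecidableEq b]
    (σ : Matrix (a × b) (a × b) ℂ) : Prop :=
  σ.PosSemidef ∧ traceNorm (ptrans σ) ≤ 1

/-- The Rains relative entropy `R(ρ) = inf_{σ ∈ PPT'} D(ρ‖σ)`. -/
noncomputable def Rains {a b : Type} [Fintype a] [Fintype b] [DecidableEq a] [DecidableEq b]
    (ρ : Matrix (a × b) (a × b) ℂ) : EReal :=
  ⨅ σ : {σ : Matrix (a × b) (a × b) ℂ // PPTprime σ}, qRelEnt ρ σ.1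

/-- The sandwiched Rényi Rains relative entropy `R̃_α(ρ) = inf_{σ ∈ PPT'} D̃_α(ρ‖σ)`. -/
noncomputable def sandRains {a b : Type} [Fintype a] [Fintype b] [DecidableEq a] [DecidableEq b]
    (α : ℝ) (ρ : Matrix (a × b) (a × b) ℂ) : EReal :=
  ⨅ σ : {σ : Matrix (a × b) (a × b) ℂ // PPTprime σ}, sandRenyi α ρ σ.1

/-- The extension `id_{Fin k} ⊗ Φ` of a linear map on matrices. -/
def matExt {n m : Type} [Fintype n] [Fintype m]
    (Φ : Matrix n n ℂ →ₗ[ℂ] Matrix m m ℂ) (k : ℕ)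
    (X : Matrix (Fin k × n) (Fin k × n) ℂ) : Matrix (Fin k × m) (Fin k × m) ℂ :=
  Matrix.of fun p q => Φ (Matrix.of fun i j => X (p.1, i) (q.1, j)) p.2 q.2

/-- Complete positivity: all extensions `id_k ⊗ Φ` preserve positive semidefiniteness. -/
def IsCP {n m : Type} [Fintype n] [Fintype m]
    (Φ : Matrix n n ℂ →ₗ[ℂ] Matrix m m ℂ) : Prop :=
  ∀ (k : ℕ) (X : Matrix (Fin k × n) (Fin k × n) ℂ), X.PosSemidef → (matExt Φ k X).PosSemidef

/-- Trace preservation. -/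
def IsTP {n m : Type} [Fintype n] [Fintype m]
    (Φ : Matrix n n ℂ →ₗ[ℂ] Matrix m m ℂ) : Prop :=
  ∀ X : Matrix n n ℂ, (Φ X).trace = X.trace

/-- A selective PPT operation: a family of completely positive maps `P x` such that
`(id ⊗ T) ∘ P x ∘ (id ⊗ T)` is completely positive for every `x` and `∑ x, P x` is
trace preserving. -/
def IsSelectivePPT {a b a' b' X : Type} [Fintype a] [Fintype b] [Fintype a'] [Fintype b']
    [Fintype X]
    (P : X → (Matrix (a × b) (a × b) ℂ →ₗ[ℂ] Matrix (a' × b') (a' × b') ℂ)) : Prop :=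
  (∀ x, IsCP (P x)) ∧ (∀ x, IsCP (ptransL ∘ₗ P x ∘ₗ ptransL)) ∧
    (∀ ρ : Matrix (a × b) (a × b) ℂ, ∑ x, ((P x) ρ).trace = ρ.trace)

/-- The maximally entangled state `Φ^d = |Φ^d⟩⟨Φ^d|`, `|Φ^d⟩ = d^{-1/2} ∑ i |i⟩|i⟩`. -/
noncomputable def maxEnt (d : ℕ) : Matrix (Fin d × Fin d) (Fin d × Fin d) ℂ :=
  Matrix.of fun p q => if p.1 = p.2 ∧ q.1 = q.2 then ((d : ℂ))⁻¹ else 0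

/-- Binary entropy `h₂(ε) = -ε log₂ ε - (1-ε) log₂ (1-ε)`. -/
noncomputable def h2 (ε : ℝ) : ℝ :=
  -ε * Real.logb 2 ε - (1 - ε) * Real.logb 2 (1 - ε)



/-!
For a unit vector `u`, measuring `{uu†, 1 - uu†}` suggests the bound
`D̃_α(ρ‖σ) ≥ (α/(α-1)) log₂ ⟨u|ρ|u⟩ - log₂ ⟨u|σ|u⟩`, which is proved directly: with
`s = (α-1)/α` and `ψ = σ^{s/2} u`, on the support of `σ` one has
`⟨ψ|σ^{-s/2} ρ σ^{-s/2}|ψ⟩ = ⟨u|ρ|u⟩`, while `‖ψ‖² = ⟨u|σ^s|u⟩ ≤ ⟨u|σ|u⟩^s` by concavity of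
`x ↦ x^s`; bounding the Rayleigh quotient by the largest eigenvalue then gives
`⟨u|ρ|u⟩^α ≤ ⟨u|σ|u⟩^{α-1} Tr[(σ^{-s/2} ρ σ^{-s/2})^α]`.

For `u = |Φ^d⟩` the first factor is `F(Φ̃^d, Φ^d) ≥ 1 - ε`, and for `σ ∈ PPT'`,
`⟨Φ^d|σ|Φ^d⟩ = Tr(σ^Γ S)/d ≤ ‖σ^Γ‖₁/d ≤ 1/d` because the swap `S` is unitary.
When `1 - ε ≤ 0` the bound is `+∞`, and it only remains to see that `R̃_α` is finite, which the
same estimate with a standard basis vector shows.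
-/

open Matrix

section

variable {n : Type} [Fintype n]

theorem _root_.Matrix.star_mulVec_dotProduct_mulVec_mulVec (B M : Matrix n n ℂ) (u v : n → ℂ) :
    star (B *ᵥ u) ⬝ᵥ M *ᵥ (B *ᵥ v) = star u ⬝ᵥ (Bᴴ * M * B) *ᵥ v := by
  rw [star_mulVec, mulVec_mulVec, dotProduct_mulVec, vecMul_vecMul, dotProduct_mulVec,
    Matrix.mul_assoc]

theorem _root_.Matrix.star_dotProduct_mulVec_eq_trace (σ : Matrix n n ℂ) (φ : n → ℂ) :
    star φ ⬝ᵥ σ *ᵥ φ = (σ * vecMulVec φ (star φ)).trace := by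
  rw [trace_mul_comm, vecMulVec_mul, trace_vecMulVec, dotProduct_mulVec, dotProduct_comm]

theorem SuppSubset.mul_eq_zero {ρ σ N : Matrix n n ℂ} (h : SuppSubset ρ σ) (hN : σ * N = 0) :
    ρ * N = 0 := by
  ext i j
  have hcol : σ *ᵥ (fun k => N k j) = 0 := funext fun i' => by
    simpa [mulVec, dotProduct, mul_apply] using congrFun (congrFun hN i') j
  simpa [mulVec, dotProduct, mul_apply] using congrFun (h _ hcol) i

variable [DecidableEq n]

theorem _root_.Equiv.Perm.permMatrix_mem_unitaryGroup (π : Equiv.Perm n) :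
    π.permMatrix ℂ ∈ unitaryGroup n ℂ := by
  rw [mem_unitaryGroup_iff, star_eq_conjTranspose, conjTranspose_permMatrix, ← permMatrix_mul,
    inv_mul_cancel, permMatrix_one]

theorem _root_.Matrix.cfc_mul_cfc (A : Matrix n n ℂ) (f g : ℝ → ℝ) :
    cfc f A * cfc g A = cfc (fun x => f x * g x) A :=
  (cfc_mul f g A (A.finite_real_spectrum.continuousOn f)
    (A.finite_real_spectrum.continuousOn g)).symm

theorem _root_.Matrix.PosSemidef.cfc_congr {A : Matrix n n ℂ} (hA : A.PosSemidef) {f g : ℝ → ℝ}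
    (h : ∀ x, 0 ≤ x → f x = g x) : cfc f A = cfc g A := by
  open scoped MatrixOrder in
  exact _root_.cfc_congr fun x hx => h x (spectrum_nonneg_of_nonneg hA.nonneg hx)

theorem _root_.Matrix.IsHermitian.cfc_eq_mul {A : Matrix n n ℂ} (hA : A.IsHermitian)
    (f : ℝ → ℝ) :
    cfc f A = (hA.eigenvectorUnitary : Matrix n n ℂ) *
      diagonal (fun i => (f (hA.eigenvalues i) : ℂ)) *
        star (hA.eigenvectorUnitary : Matrix n n ℂ) := by
  rw [hA.cfc_eq, IsHermitian.cfc, Unitary.conjStarAlgAut_apply]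
  rfl

theorem _root_.Matrix.IsHermitian.trace_cfc {A : Matrix n n ℂ} (hA : A.IsHermitian)
    (f : ℝ → ℝ) : (cfc f A).trace = ∑ i, (f (hA.eigenvalues i) : ℂ) := by
  rw [hA.cfc_eq_mul, trace_mul_cycle, Unitary.coe_star_mul_self, one_mul, trace_diagonal]

theorem _root_.Matrix.IsHermitian.dotProduct_cfc_mulVec {A : Matrix n n ℂ} (hA : A.IsHermitian)
    (f : ℝ → ℝ) (u : n → ℂ) :
    star u ⬝ᵥ cfc f A *ᵥ u = ∑ i, (f (hA.eigenvalues i) : ℂ) *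
      Complex.normSq ((star (hA.eigenvectorUnitary : Matrix n n ℂ) *ᵥ u) i) := by
  set U := (hA.eigenvectorUnitary : Matrix n n ℂ)
  have hstar : star u ᵥ* U = star (star U *ᵥ u) := by
    rw [star_mulVec, star_eq_conjTranspose, conjTranspose_conjTranspose]
  rw [hA.cfc_eq_mul, ← mulVec_mulVec, ← mulVec_mulVec, dotProduct_mulVec, hstar]
  refine Finset.sum_congr rfl fun i _ => ?_
  rw [Pi.star_apply, mulVec_diagonal, Complex.normSq_eq_conj_mul_self]
  simp only [RCLike.star_def]
  ring

theorem _root_.Matrix.IsHermitian.re_dotProduct_cfc_mulVec {A : Matrix n n ℂ}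
    (hA : A.IsHermitian) (f : ℝ → ℝ) (u : n → ℂ) :
    (star u ⬝ᵥ cfc f A *ᵥ u).re = ∑ i,
      Complex.normSq ((star (hA.eigenvectorUnitary : Matrix n n ℂ) *ᵥ u) i) *
        f (hA.eigenvalues i) := by
  rw [hA.dotProduct_cfc_mulVec]
  simp [Complex.re_sum, mul_comm]

theorem _root_.Matrix.IsHermitian.sum_normSq_star_eigenvectorUnitary_mulVec {A : Matrix n n ℂ}
    (hA : A.IsHermitian) (u : n → ℂ) :
    ∑ i, Complex.normSq ((star (hA.eigenvectorUnitary : Matrix n n ℂ) *ᵥ u) i)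
      = (star u ⬝ᵥ u).re := by
  have h := hA.dotProduct_cfc_mulVec (fun _ => 1) u
  rw [cfc_const_one ℝ A, one_mulVec] at h
  simp [h]

theorem matPow_eq_cfc (A : Matrix n n ℂ) (r : ℝ) :
    matPow A r = cfc (fun x : ℝ => x ^ r) A := by
  by_cases hA : A.IsHermitian
  · rw [matPow, dif_pos hA, hA.cfc_eq_mul]
  · rw [matPow, dif_neg hA]
    exact (cfc_apply_of_not_predicate A hA).symm

theorem isHermitian_matPow (A : Matrix n n ℂ) (r : ℝ) : (matPow A r).IsHermitian := by
  rw [matPow_eq_cfc]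
  exact cfc_predicate _ A

theorem matPow_mul_matPow {A : Matrix n n ℂ} (hA : A.PosSemidef) {r s t : ℝ}
    (h : ∀ x : ℝ, 0 ≤ x → x ^ r * x ^ s = x ^ t) : matPow A r * matPow A s = matPow A t := by
  rw [matPow_eq_cfc, matPow_eq_cfc, matPow_eq_cfc, cfc_mul_cfc]
  exact hA.cfc_congr h

theorem matPow_one {A : Matrix n n ℂ} (hA : A.IsHermitian) : matPow A 1 = A := by
  rw [matPow_eq_cfc]
  simp only [Real.rpow_one]
  exact cfc_id' ℝ A hA.isSelfAdjoint

theorem matPow_inv_two_mul_self {A : Matrix n n ℂ} (hA : A.PosSemidef) :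
    matPow A 2⁻¹ * matPow A 2⁻¹ = A := by
  rw [matPow_mul_matPow hA (t := 1) fun x hx => ?_, matPow_one hA.1]
  rw [← Real.rpow_add' hx (by norm_num)]
  norm_num

theorem matPow_inv_two_eq_of_mul_self {A B : Matrix n n ℂ} (hA : A.PosSemidef)
    (hB : B.PosSemidef) (h : B * B = A) : matPow A 2⁻¹ = B := by
  open scoped MatrixOrder in
  have hsqrt : matPow A 2⁻¹ = CFC.sqrt A := by
    rw [CFC.sqrt_eq_real_sqrt A hA.nonneg, cfcₙ_eq_cfc, matPow_eq_cfc]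
    exact hA.cfc_congr fun x hx => by rw [Real.sqrt_eq_rpow, one_div]
  open scoped MatrixOrder in
  exact hsqrt.trans ((CFC.sqrt_eq_iff A B hA.nonneg hB.nonneg).2 h)

theorem re_trace_matPow {A : Matrix n n ℂ} (hA : A.IsHermitian) (r : ℝ) :
    ((matPow A r).trace).re = ∑ i, hA.eigenvalues i ^ r := by
  rw [matPow_eq_cfc, hA.trace_cfc]
  simp [Complex.re_sum]

theorem re_trace_matPow_nonneg {A : Matrix n n ℂ} (hA : A.PosSemidef) (r : ℝ) :
    0 ≤ ((matPow A r).trace).re := by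
  rw [re_trace_matPow hA.1]
  exact Finset.sum_nonneg fun i _ => Real.rpow_nonneg (hA.eigenvalues_nonneg i) _

theorem re_dotProduct_matPow_mulVec_le_rpow {σ : Matrix n n ℂ} (hσ : σ.PosSemidef) {s : ℝ}
    (hs₀ : 0 ≤ s) (hs₁ : s ≤ 1) {u : n → ℂ} (hu : star u ⬝ᵥ u = 1) :
    (star u ⬝ᵥ matPow σ s *ᵥ u).re ≤ (star u ⬝ᵥ σ *ᵥ u).re ^ s := by
  have hσ' := hσ.1
  have hw := hσ'.sum_normSq_star_eigenvectorUnitary_mulVec u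
  rw [hu, Complex.one_re] at hw
  conv_rhs => rw [← cfc_id' ℝ σ]
  rw [matPow_eq_cfc, hσ'.re_dotProduct_cfc_mulVec, hσ'.re_dotProduct_cfc_mulVec]
  simpa using (Real.concaveOn_rpow hs₀ hs₁).le_map_sum
    (fun i _ => Complex.normSq_nonneg _) hw (fun i _ => hσ.eigenvalues_nonneg i)

theorem re_dotProduct_mulVec_rpow_le_mul_re_trace_matPow {M : Matrix n n ℂ} (hM : M.PosSemidef)
    {α : ℝ} (hα : 0 < α) (ψ : n → ℂ) :
    (star ψ ⬝ᵥ M *ᵥ ψ).re ^ α ≤ (star ψ ⬝ᵥ ψ).re ^ α * ((matPow M α).trace).re := by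
  have hM' := hM.1
  set Q := ((matPow M α).trace).re
  have hQ : Q = ∑ i, hM'.eigenvalues i ^ α := re_trace_matPow hM' α
  have hQ₀ : 0 ≤ Q := re_trace_matPow_nonneg hM α
  have hle : ∀ i, hM'.eigenvalues i ≤ Q ^ α⁻¹ := fun i => by
    calc hM'.eigenvalues i = (hM'.eigenvalues i ^ α) ^ α⁻¹ :=
          (Real.rpow_rpow_inv (hM.eigenvalues_nonneg i) hα.ne').symm
      _ ≤ Q ^ α⁻¹ := by
          refine Real.rpow_le_rpow (Real.rpow_nonneg (hM.eigenvalues_nonneg i) _) ?_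
            (by positivity)
          rw [hQ]
          exact Finset.single_le_sum (fun j _ => Real.rpow_nonneg (hM.eigenvalues_nonneg j) _)
            (Finset.mem_univ i)
  have hψψ : 0 ≤ (star ψ ⬝ᵥ ψ).re := by
    rw [← hM'.sum_normSq_star_eigenvectorUnitary_mulVec]
    exact Finset.sum_nonneg fun i _ => Complex.normSq_nonneg _
  have hψ : (star ψ ⬝ᵥ M *ᵥ ψ).re ≤ (star ψ ⬝ᵥ ψ).re * Q ^ α⁻¹ := by
    conv_lhs => rw [← cfc_id' ℝ M]
    rw [hM'.re_dotProduct_cfc_mulVec, ← hM'.sum_normSq_star_eigenvectorUnitary_mulVec,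
      Finset.sum_mul]
    exact Finset.sum_le_sum fun i _ =>
      mul_le_mul_of_nonneg_left (hle i) (Complex.normSq_nonneg _)
  calc (star ψ ⬝ᵥ M *ᵥ ψ).re ^ α ≤ ((star ψ ⬝ᵥ ψ).re * Q ^ α⁻¹) ^ α :=
        Real.rpow_le_rpow (hM.re_dotProduct_nonneg ψ) hψ hα.le
    _ = (star ψ ⬝ᵥ ψ).re ^ α * Q := by
        rw [Real.mul_rpow hψψ (by positivity), Real.rpow_inv_rpow hQ₀ hα.ne']

theorem SuppSubset.matPow_conj_matPow_neg_conj {ρ σ : Matrix n n ℂ} (h : SuppSubset ρ σ)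
    (hρ : ρ.IsHermitian) (hσ : σ.PosSemidef) (r : ℝ) :
    matPow σ r * (matPow σ (-r) * ρ * matPow σ (-r)) * matPow σ r = ρ := by
  -- `P` is the projection onto the support of `σ`
  set P := cfc (fun x : ℝ => x ^ r * x ^ (-r)) σ with hPdef
  have hP : matPow σ r * matPow σ (-r) = P := by
    rw [matPow_eq_cfc, matPow_eq_cfc, cfc_mul_cfc]
  have hP' : matPow σ (-r) * matPow σ r = P := by
    rw [matPow_eq_cfc, matPow_eq_cfc, cfc_mul_cfc, hPdef]
    simp_rw [mul_comm]
  have hσP : σ * (1 - P) = 0 := by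
    have hσ' := cfc_id' ℝ σ hσ.1.isSelfAdjoint
    rw [mul_sub, mul_one, sub_eq_zero, ← hσ', hPdef, cfc_mul_cfc]
    refine (hσ.cfc_congr fun x hx => ?_).symm
    rcases hx.eq_or_lt with rfl | hx
    · simp
    · rw [Real.rpow_neg hx.le, mul_inv_cancel₀ (Real.rpow_pos_of_pos hx r).ne', mul_one]
  have hρP : ρ * P = ρ := by
    have := h.mul_eq_zero hσP
    rwa [mul_sub, mul_one, sub_eq_zero, eq_comm] at this
  have hPρ : P * ρ = ρ := by
    have hPH : P.IsHermitian := cfc_predicate _ σ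
    simpa [conjTranspose_mul, hPH.eq, hρ.eq] using congrArg conjTranspose hρP
  calc matPow σ r * (matPow σ (-r) * ρ * matPow σ (-r)) * matPow σ r
      = (matPow σ r * matPow σ (-r)) * ρ * (matPow σ (-r) * matPow σ r) := by
        simp only [Matrix.mul_assoc]
    _ = ρ := by rw [hP, hP', hPρ, hρP]

noncomputable def sandRenyiTrace (α : ℝ) (ω τ : Matrix n n ℂ) : ℝ :=
  ((matPow (matPow τ ((1 - α) / (2 * α)) * ω * matPow τ ((1 - α) / (2 * α))) α).trace).re

theorem rpow_le_rpow_mul_sandRenyiTrace {ρ σ : Matrix n n ℂ} (hρ : ρ.PosSemidef)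
    (hσ : σ.PosSemidef) (hsupp : SuppSubset ρ σ) {α : ℝ} (hα : 1 < α) {u : n → ℂ}
    (hu : star u ⬝ᵥ u = 1) :
    (star u ⬝ᵥ ρ *ᵥ u).re ^ α ≤ (star u ⬝ᵥ σ *ᵥ u).re ^ (α - 1) * sandRenyiTrace α ρ σ := by
  have hα₀ : 0 < α := by linarith
  set s := (α - 1) / α with hs
  have hs₀ : 0 < s := div_pos (by linarith) hα₀
  have hs₁ : s ≤ 1 := (div_le_one hα₀).2 (by linarith)
  have hγ : (1 - α) / (2 * α) = -(s / 2) := by rw [hs]; field_simp; ring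
  set A := matPow σ (-(s / 2))
  set B := matPow σ (s / 2)
  have hA : Aᴴ = A := (isHermitian_matPow σ _).eq
  have hB : Bᴴ = B := (isHermitian_matPow σ _).eq
  have hM : (A * ρ * A).PosSemidef := by
    simpa only [hA] using hρ.mul_mul_conjTranspose_same A
  have hQ : sandRenyiTrace α ρ σ = ((matPow (A * ρ * A) α).trace).re := by
    rw [sandRenyiTrace, hγ]
  have hBB : B * B = matPow σ s := matPow_mul_matPow hσ fun x hx => by
    rw [← Real.rpow_add' hx (by positivity), add_halves]
  have hMψ : star (B *ᵥ u) ⬝ᵥ (A * ρ * A) *ᵥ (B *ᵥ u) = star u ⬝ᵥ ρ *ᵥ u := by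
    rw [star_mulVec_dotProduct_mulVec_mulVec, hB, hsupp.matPow_conj_matPow_neg_conj hρ.1 hσ]
  have hψψ : star (B *ᵥ u) ⬝ᵥ (B *ᵥ u) = star u ⬝ᵥ matPow σ s *ᵥ u := by
    simpa [hB, hBB] using star_mulVec_dotProduct_mulVec_mulVec B 1 u u
  have hψψ₀ : 0 ≤ (star (B *ᵥ u) ⬝ᵥ (B *ᵥ u)).re := by
    simpa using PosSemidef.one.re_dotProduct_nonneg (B *ᵥ u)
  have hq₀ : 0 ≤ (star u ⬝ᵥ σ *ᵥ u).re := by simpa using hσ.re_dotProduct_nonneg u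
  calc (star u ⬝ᵥ ρ *ᵥ u).re ^ α
      ≤ (star (B *ᵥ u) ⬝ᵥ (B *ᵥ u)).re ^ α * sandRenyiTrace α ρ σ := by
        rw [← hMψ, hQ]
        exact re_dotProduct_mulVec_rpow_le_mul_re_trace_matPow hM hα₀ _
    _ ≤ ((star u ⬝ᵥ σ *ᵥ u).re ^ s) ^ α * sandRenyiTrace α ρ σ := by
        refine mul_le_mul_of_nonneg_right (Real.rpow_le_rpow hψψ₀ ?_ hα₀.le)
          (hQ ▸ re_trace_matPow_nonneg hM α)
        rw [hψψ]
        exact re_dotProduct_matPow_mulVec_le_rpow hσ hs₀.le hs₁ hu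
    _ = (star u ⬝ᵥ σ *ᵥ u).re ^ (α - 1) * sandRenyiTrace α ρ σ := by
        rw [← Real.rpow_mul hq₀, hs, div_mul_cancel₀ _ hα₀.ne']

theorem elog2_of_pos {x : ℝ} (hx : 0 < x) : elog2 x = ((Real.logb 2 x : ℝ) : EReal) := by
  rw [elog2, if_neg hx.not_ge]

theorem sandRenyi_eq_of_one_lt {α : ℝ} (hα : 1 < α) {ω τ : Matrix n n ℂ}
    (h : SuppSubset ω τ) :
    sandRenyi α ω τ = (((α - 1)⁻¹ : ℝ) : EReal) * elog2 (sandRenyiTrace α ω τ) := by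
  rw [sandRenyi, if_pos (Or.inr ⟨hα, h⟩)]
  rfl

theorem sandRenyi_eq_top_of_not_suppSubset {α : ℝ} (hα : 1 < α) {ω τ : Matrix n n ℂ}
    (h : ¬SuppSubset ω τ) : sandRenyi α ω τ = ⊤ := by
  rw [sandRenyi, if_neg]
  rintro (⟨-, hα'⟩ | ⟨-, h'⟩)
  exacts [hα.not_gt hα', h h']

theorem le_sandRenyi {ρ σ : Matrix n n ℂ} (hρ : ρ.PosSemidef) (hσ : σ.PosSemidef) {α : ℝ}
    (hα : 1 < α) {u : n → ℂ} (hu : star u ⬝ᵥ u = 1) (hp : 0 < (star u ⬝ᵥ ρ *ᵥ u).re) {c : ℝ}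
    (hc : (star u ⬝ᵥ σ *ᵥ u).re ≤ c) :
    ((α / (α - 1) * Real.logb 2 (star u ⬝ᵥ ρ *ᵥ u).re - Real.logb 2 c : ℝ) : EReal)
      ≤ sandRenyi α ρ σ := by
  by_cases hsupp : SuppSubset ρ σ
  swap
  · rw [sandRenyi_eq_top_of_not_suppSubset hα hsupp]
    exact le_top
  set p := (star u ⬝ᵥ ρ *ᵥ u).re
  set q := (star u ⬝ᵥ σ *ᵥ u).re
  set Q := sandRenyiTrace α ρ σ
  have hα₁ : 0 < α - 1 := by linarith
  have hpq : p ^ α ≤ q ^ (α - 1) * Q := rpow_le_rpow_mul_sandRenyiTrace hρ hσ hsupp hα hu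
  have hpα : 0 < p ^ α := Real.rpow_pos_of_pos hp α
  have hq : 0 < q := by
    have hq₀ : 0 ≤ q := by simpa using hσ.re_dotProduct_nonneg u
    refine hq₀.lt_of_ne fun hq => ?_
    rw [← hq, Real.zero_rpow hα₁.ne', zero_mul] at hpq
    exact hpα.not_ge hpq
  have hQ : 0 < Q := pos_of_mul_pos_right (hpα.trans_le hpq) (Real.rpow_nonneg hq.le _)
  have hlog : α * Real.logb 2 p ≤ (α - 1) * Real.logb 2 q + Real.logb 2 Q := by
    have := Real.logb_le_logb_of_le (b := 2) (by norm_num) hpα hpq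
    rwa [Real.logb_mul (Real.rpow_pos_of_pos hq _).ne' hQ.ne',
      Real.logb_rpow_eq_mul_logb_of_pos hp, Real.logb_rpow_eq_mul_logb_of_pos hq] at this
  have hqc : Real.logb 2 q ≤ Real.logb 2 c := Real.logb_le_logb_of_le (by norm_num) hq hc
  rw [sandRenyi_eq_of_one_lt hα hsupp, elog2_of_pos hQ, ← EReal.coe_mul, EReal.coe_le_coe_iff,
    le_inv_mul_iff₀ hα₁, mul_sub, ← mul_assoc, mul_div_cancel₀ _ hα₁.ne']
  linarith [mul_le_mul_of_nonneg_left hqc hα₁.le]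

theorem traceNorm_eq_sum_abs_eigenvalues {T : Matrix n n ℂ} (hT : T.IsHermitian) :
    traceNorm T = ∑ i, |hT.eigenvalues i| := by
  have hTT : Tᴴ * T = cfc (fun x : ℝ => x * x) T := by
    rw [hT.eq, ← cfc_mul_cfc, cfc_id' ℝ T hT.isSelfAdjoint]
  have habs : matPow (Tᴴ * T) 2⁻¹ = cfc (fun x : ℝ => |x|) T := by
    rw [hTT, matPow_eq_cfc, ← cfc_comp _ _ T hT.isSelfAdjoint
      ((T.finite_real_spectrum.image _).continuousOn _) (T.finite_real_spectrum.continuousOn _)]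
    refine cfc_congr fun x _ => ?_
    rw [Function.comp_apply, inv_eq_one_div, ← Real.sqrt_eq_rpow, Real.sqrt_mul_self_eq_abs]
  rw [traceNorm, habs, hT.trace_cfc]
  simp [Complex.re_sum]

theorem re_trace_mul_le_traceNorm {T W : Matrix n n ℂ} (hT : T.IsHermitian)
    (hW : W ∈ unitaryGroup n ℂ) : ((T * W).trace).re ≤ traceNorm T := by
  set U := (hT.eigenvectorUnitary : Matrix n n ℂ)
  set V := star U * W * U
  have hV : V ∈ unitaryGroup n ℂ :=
    Submonoid.mul_mem _ (Submonoid.mul_mem _ (Unitary.star_mem hT.eigenvectorUnitary.2) hW)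
      hT.eigenvectorUnitary.2
  have htr : (T * W).trace = ∑ i, (hT.eigenvalues i : ℂ) * V i i := by
    conv_lhs => rw [← cfc_id' ℝ T hT.isSelfAdjoint, hT.cfc_eq_mul]
    rw [Matrix.mul_assoc, trace_mul_comm, ← Matrix.mul_assoc]
    simp [trace, mul_diagonal, V, U, mul_comm]
  rw [htr, Complex.re_sum, traceNorm_eq_sum_abs_eigenvalues hT]
  refine Finset.sum_le_sum fun i _ => ?_
  calc ((hT.eigenvalues i : ℂ) * V i i).re ≤ ‖(hT.eigenvalues i : ℂ) * V i i‖ :=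
        Complex.re_le_norm _
    _ ≤ |hT.eigenvalues i| := by
        rw [norm_mul, Complex.norm_real, Real.norm_eq_abs]
        exact mul_le_of_le_one_right (abs_nonneg _) (entry_norm_bound_of_unitary hV i i)

theorem fidelity_vecMulVec_star {ρ : Matrix n n ℂ} (hρ : ρ.PosSemidef) {φ : n → ℂ}
    (hφ : star φ ⬝ᵥ φ = 1) :
    fidelity ρ (vecMulVec φ (star φ)) = (star φ ⬝ᵥ ρ *ᵥ φ).re := by
  set Φ := vecMulVec φ (star φ)
  set p := (star φ ⬝ᵥ ρ *ᵥ φ).re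
  have hΦ : Φ.PosSemidef := posSemidef_vecMulVec_self_star φ
  have hp : 0 ≤ p := hρ.re_dotProduct_nonneg φ
  have hpC : star φ ⬝ᵥ ρ *ᵥ φ = (p : ℂ) :=
    Complex.eq_re_of_ofReal_le (r := 0)
      (by rw [Complex.ofReal_zero]; exact hρ.dotProduct_mulVec_nonneg φ)
  have hΦΦ : Φ * Φ = Φ := by rw [vecMulVec_mul_vecMulVec, hφ, one_smul]
  have hΦρΦ : Φ * ρ * Φ = (p : ℂ) • Φ := by
    rw [vecMulVec_mul, vecMulVec_mul_vecMulVec, ← dotProduct_mulVec, hpC, vecMulVec_smul]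
  have hX : (matPow ρ 2⁻¹ * Φ)ᴴ * (matPow ρ 2⁻¹ * Φ) = (p : ℂ) • Φ := by
    rw [conjTranspose_mul, hΦ.1.eq, (isHermitian_matPow ρ 2⁻¹).eq, Matrix.mul_assoc,
      ← Matrix.mul_assoc (matPow ρ 2⁻¹), matPow_inv_two_mul_self hρ, ← Matrix.mul_assoc, hΦρΦ]
  have hsqrt : matPow ((p : ℂ) • Φ) 2⁻¹ = ((√p : ℝ) : ℂ) • Φ := by
    refine matPow_inv_two_eq_of_mul_self (hΦ.smul (Complex.zero_le_real.2 hp))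
      (hΦ.smul (Complex.zero_le_real.2 (Real.sqrt_nonneg p))) ?_
    rw [smul_mul_smul_comm, hΦΦ, ← Complex.ofReal_mul, Real.mul_self_sqrt hp]
  rw [fidelity, matPow_inv_two_eq_of_mul_self hΦ hΦ hΦΦ, traceNorm, hX, hsqrt, trace_smul,
    trace_vecMulVec, dotProduct_comm, hφ, smul_eq_mul, mul_one, Complex.ofReal_re,
    Real.sq_sqrt hp]

end

theorem ptrans_isHermitian {a b : Type} {σ : Matrix (a × b) (a × b) ℂ} (h : σ.IsHermitian) :
    (ptrans σ).IsHermitian :=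
  ext fun p q => h.apply (p.1, q.2) (q.1, p.2)

section

variable {a b : Type} [Fintype a] [Fintype b] [DecidableEq a] [DecidableEq b]

theorem le_sandRains {ρ : Matrix (a × b) (a × b) ℂ} (hρ : ρ.PosSemidef) {α : ℝ} (hα : 1 < α)
    {u : a × b → ℂ} (hu : star u ⬝ᵥ u = 1) (hp : 0 < (star u ⬝ᵥ ρ *ᵥ u).re) {c : ℝ}
    (hc : ∀ σ, PPTprime σ → (star u ⬝ᵥ σ *ᵥ u).re ≤ c) :
    ((α / (α - 1) * Real.logb 2 (star u ⬝ᵥ ρ *ᵥ u).re - Real.logb 2 c : ℝ) : EReal)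
      ≤ sandRains α ρ :=
  le_iInf fun σ => le_sandRenyi hρ σ.2.1 hα hu hp (hc σ.1 σ.2)

theorem PPTprime.re_trace_ptrans_mul_le_one {σ W : Matrix (a × b) (a × b) ℂ} (hσ : PPTprime σ)
    (hW : W ∈ unitaryGroup (a × b) ℂ) : ((ptrans σ * W).trace).re ≤ 1 :=
  (re_trace_mul_le_traceNorm (ptrans_isHermitian hσ.1.1) hW).trans hσ.2

theorem PPTprime.re_apply_self_le_one {σ : Matrix (a × b) (a × b) ℂ} (hσ : PPTprime σ)
    (p : a × b) : (σ p p).re ≤ 1 := by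
  have htr : (σ.trace).re ≤ 1 := by
    simpa [ptrans, trace] using hσ.re_trace_ptrans_mul_le_one (one_mem _)
  refine le_trans ?_ htr
  rw [trace, Complex.re_sum]
  exact Finset.single_le_sum (f := fun q => (σ q q).re)
    (fun q _ => (RCLike.nonneg_iff.mp hσ.1.diag_nonneg).1) (Finset.mem_univ p)

theorem IsState.sandRains_ne_bot {ρ : Matrix (a × b) (a × b) ℂ} (hρ : IsState ρ) {α : ℝ}
    (hα : 1 < α) : sandRains α ρ ≠ ⊥ := by
  obtain ⟨p, hp⟩ : ∃ p, 0 < (ρ p p).re := by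
    by_contra! h
    have htr : (ρ.trace).re = 1 := by rw [hρ.2, Complex.one_re]
    simp only [trace, diag_apply, Complex.re_sum] at htr
    linarith [Finset.sum_nonpos fun p (_ : p ∈ Finset.univ) => h p]
  exact ne_bot_of_le_ne_bot (EReal.coe_ne_bot _) (le_sandRains hρ.1 hα (u := Pi.single p 1)
    (by simp) (by simpa using hp) (c := 1) fun σ hσ => by simpa using hσ.re_apply_self_le_one p)

end

noncomputable def maxEntVec (d : ℕ) : Fin d × Fin d → ℂ :=
  fun p => if p.1 = p.2 then ((√d)⁻¹ : ℝ) else 0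

theorem maxEnt_eq_vecMulVec (d : ℕ) :
    maxEnt d = vecMulVec (maxEntVec d) (star (maxEntVec d)) := by
  ext p q
  by_cases hp : p.1 = p.2 <;> by_cases hq : q.1 = q.2 <;>
    simp [maxEnt, maxEntVec, vecMulVec_apply, hp, hq, ← Complex.ofReal_mul, ← mul_inv]

theorem trace_maxEnt {d : ℕ} (hd : 1 ≤ d) : (maxEnt d).trace = 1 := by
  have : (d : ℂ) ≠ 0 := by exact_mod_cast (by omega : d ≠ 0)
  simp [trace, maxEnt, Fintype.sum_prod_type, this]

theorem star_maxEntVec_dotProduct_self {d : ℕ} (hd : 1 ≤ d) :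
    star (maxEntVec d) ⬝ᵥ maxEntVec d = 1 := by
  rw [dotProduct_comm, ← trace_vecMulVec, ← maxEnt_eq_vecMulVec, trace_maxEnt hd]

theorem PPTprime.re_dotProduct_maxEntVec_le {d : ℕ}
    {σ : Matrix (Fin d × Fin d) (Fin d × Fin d) ℂ} (hσ : PPTprime σ) :
    (star (maxEntVec d) ⬝ᵥ σ *ᵥ maxEntVec d).re ≤ (d : ℝ)⁻¹ := by
  set S := Equiv.Perm.permMatrix ℂ (Equiv.prodComm (Fin d) (Fin d))
  -- `Tr(σ Φ) = Tr(σ^Γ Φ^Γ)` and `Φ^Γ = S / d`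
  have h : star (maxEntVec d) ⬝ᵥ σ *ᵥ maxEntVec d
      = ((d : ℝ)⁻¹ : ℝ) * (ptrans σ * S).trace := by
    rw [star_dotProduct_mulVec_eq_trace, ← maxEnt_eq_vecMulVec, PEquiv.mul_toMatrix_toPEquiv]
    simp [trace, mul_apply, maxEnt, ptrans, Fintype.sum_prod_type, Finset.mul_sum, ite_and,
      mul_comm]
  rw [h, Complex.re_ofReal_mul]
  exact mul_le_of_le_one_right (by positivity)
    (hσ.re_trace_ptrans_mul_le_one (Equiv.Perm.permMatrix_mem_unitaryGroup _))

theorem logb_add_le_sandRains {d : ℕ} (hd : 1 ≤ d)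
    {ρ : Matrix (Fin d × Fin d) (Fin d × Fin d) ℂ} (hρ : ρ.PosSemidef) {α : ℝ} (hα : 1 < α)
    (hF : 0 < fidelity ρ (maxEnt d)) :
    ((Real.logb 2 d + α / (α - 1) * Real.logb 2 (fidelity ρ (maxEnt d)) : ℝ) : EReal)
      ≤ sandRains α ρ := by
  have hu := star_maxEntVec_dotProduct_self hd
  rw [maxEnt_eq_vecMulVec, fidelity_vecMulVec_star hρ hu] at hF ⊢
  have := le_sandRains hρ hα hu hF fun σ hσ => hσ.re_dotProduct_maxEntVec_le
  rwa [Real.logb_inv, sub_neg_eq_add, add_comm] at this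

theorem approx_ebits_sandRains_general {d : ℕ} (hd : 1 ≤ d) (ε : ℝ)
    (Φt : Matrix (Fin d × Fin d) (Fin d × Fin d) ℂ) (hΦt : IsState Φt)
    (hF : 1 - ε ≤ fidelity Φt (maxEnt d)) :
    ∀ α : ℝ, 1 < α →
      ((Real.logb 2 d : ℝ) : EReal) ≤
        sandRains α Φt + ((α / (α - 1) : ℝ) : EReal) * (-(elog2 (1 - ε))) := by
  intro α hα
  have hα' : 0 < α / (α - 1) := div_pos (by linarith) (by linarith)
  rcases le_or_gt (1 - ε) 0 with hε | hε
  · rw [elog2, if_pos hε, EReal.neg_bot, EReal.coe_mul_top_of_pos hα',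
      EReal.add_top_of_ne_bot (hΦt.sandRains_ne_bot hα)]
    exact le_top
  · have hlow := logb_add_le_sandRains hd hΦt.1 hα (hε.trans_le hF)
    have hlog := mul_le_mul_of_nonneg_left
      (Real.logb_le_logb_of_le (b := 2) (by norm_num) hε hF) hα'.le
    rw [elog2_of_pos hε, ← EReal.coe_neg, ← EReal.coe_mul]
    calc ((Real.logb 2 d : ℝ) : EReal)
        ≤ ((Real.logb 2 d + α / (α - 1) * Real.logb 2 (fidelity Φt (maxEnt d)) : ℝ) : EReal)
          + ((α / (α - 1) * -Real.logb 2 (1 - ε) : ℝ) : EReal) := by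
          rw [← EReal.coe_add, EReal.coe_le_coe_iff]
          linarith
      _ ≤ sandRains α Φt + ((α / (α - 1) * -Real.logb 2 (1 - ε) : ℝ) : EReal) := by gcongr

/-- Rains relative entropy of approximate e-bits, sandwiched Rényi
version: if `ε ∈ [0,1]`, `Φ̃^d` is a state with `F(Φ̃^d, Φ^d) ≥ 1 - ε`, then for all
`α > 1`, `log₂ d ≤ R̃_α(Φ̃^d) + (α/(α-1)) log₂(1/(1-ε))`
(with `log₂(1/(1-ε)) = -log₂(1-ε) = +∞` when `ε = 1`). -/
theorem approx_ebits_sandRains {d : ℕ} (hd : 1 ≤ d) (ε : ℝ) (hε : 0 ≤ ε) (hε1 : ε ≤ 1)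
    (Φt : Matrix (Fin d × Fin d) (Fin d × Fin d) ℂ) (hΦt : IsState Φt)
    (hF : 1 - ε ≤ fidelity Φt (maxEnt d)) :
    ∀ α : ℝ, 1 < α →
      ((Real.logb 2 d : ℝ) : EReal) ≤
        sandRains α Φt + ((α / (α - 1) : ℝ) : EReal) * (-(elog2 (1 - ε))) :=
  approx_ebits_sandRains_general hd ε Φt hΦt hF

end RainsPaper
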